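/- arXiv:2501.07379 — 2 statements merged into one kernel-verified Lean document; each statement's English description precedes it below -/
import Mathlib

section
/- Let ε > 0, k ≥ 1 an integer, Γ_ε as above, and q a probability density on ℝ with all moments finite, mean M₁, and central moments Mⱼᶜ = ∫ (x − M₁)ʲ q(x) dx. Then ∫ (x − M₁)^{2k} T̃_ε[q](x) dx = (2/4ᵏ) M₂ₖᶜ + Σ_{l=0}^{k−1} Σ_{j=0}^{2l} σ_{k−l} ε^{2(k−l)} (1/4ˡ) C(2k,2l) C(2l,j) M_{2l−j}ᶜ Mⱼᶜ + Σ_{j=2}^{2k−2} (1/4ᵏ) C(2k,j) M_{2k−j}ᶜ Mⱼᶜ, where σ_m ε^{2m} denotes the 2m-th moment of Γ_ε (so σ_m = (2m)!/(m! 4^m) · 2^{−m} up to the variance normalization Var(Γ_ε) = ε²/2). -/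
/-!
Write `T̃_ε[q](x)` as an integral of `Γ_ε(x - (y+y')/2)` against `q ⊗ q` and swap the order of
integration (everything is nonnegative, so Tonelli applies). For fixed `y, y'`, put
`c = (y+y')/2 - M₁`; then `∫ (x - M₁)^{2k} Γ_ε(x - (y+y')/2) dx = ∫ (u + c)^{2k} Γ_ε(u) du`, and
the binomial expansion keeps only the even moments of `Γ_ε`, giving
`∑_m C(2k,2m) σ_m ε^{2m} c^{2k-2m}`. Expanding `c^{2k-2m} = 2^{-(2k-2m)} ((y-M₁) + (y'-M₁))^{2k-2m}`
and integrating against `q ⊗ q` produces products of central moments. The term `m = 0` (total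
mass of `Γ_ε` is `1`) gives the `4^{-k}` terms, where `M₀ᶜ = 1` and `M₁ᶜ = 0` leave
`2 M₂ₖᶜ` plus the range `2 ≤ j ≤ 2k-2`; the terms `m ≥ 1` become the double sum via `l = k - m`.
-/

open MeasureTheory Real Finset

noncomputable def Gam (ε x : ℝ) : ℝ := (1 / (ε * Real.sqrt Real.pi)) * Real.exp (-(x ^ 2) / ε ^ 2)

noncomputable def Ttil (ε : ℝ) (q : ℝ → ℝ) (x : ℝ) : ℝ :=
  ∫ y, ∫ y', Gam ε (x - (y + y') / 2) * q y * q y'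

/-- `σ_m` defined so that the `2m`-th moment of `Γ_ε` equals `σ_m ε^{2m}`:
it is the `2m`-th moment of `Γ_1`. -/
noncomputable def sigGam (m : ℕ) : ℝ := ∫ x, x ^ (2 * m) * Gam 1 x

lemma sum_range_two_mul_add_one_of_odd_eq_zero {M : Type*} [AddCommMonoid M] (f : ℕ → M)
    (hf : ∀ m, f (2 * m + 1) = 0) (n : ℕ) :
    ∑ i ∈ range (2 * n + 1), f i = ∑ m ∈ range (n + 1), f (2 * m) := by
  induction n with
  | zero => simp
  | succ n ih =>
    rw [show 2 * (n + 1) + 1 = 2 * n + 1 + 1 + 1 by ring, sum_range_succ, sum_range_succ, ih,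
      hf, add_zero, sum_range_succ (n := n + 1)]
    rfl

section Moments

variable {g : ℝ → ℝ}

lemma integrable_add_pow_mul (hg : ∀ i : ℕ, Integrable (fun u => u ^ i * g u)) (d : ℝ)
    (n : ℕ) :
    Integrable (fun u => (u + d) ^ n * g u) := by
  simp_rw [add_pow, sum_mul]
  exact integrable_finsetSum _ fun i _ =>
    ((hg i).const_mul (d ^ (n - i) * n.choose i)).congr (.of_forall fun u => by ring)

lemma integral_add_pow_mul (hg : ∀ i : ℕ, Integrable (fun u => u ^ i * g u)) (d : ℝ)
    (n : ℕ) :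
    ∫ u, (u + d) ^ n * g u =
      ∑ i ∈ range (n + 1), n.choose i * d ^ (n - i) * ∫ u, u ^ i * g u := by
  simp_rw [add_pow, sum_mul]
  rw [integral_finsetSum _ fun i _ => ((hg i).const_mul (d ^ (n - i) * n.choose i)).congr
    (.of_forall fun u => by ring)]
  refine sum_congr rfl fun i _ => ?_
  rw [← integral_const_mul]
  exact integral_congr_ae (.of_forall fun u => by ring)

lemma integrable_pow_mul_of_integrable_abs_pow_mul
    (hg : ∀ n : ℕ, Integrable (fun x => |x| ^ n * g x)) (n : ℕ) :
    Integrable (fun x => x ^ n * g x) := by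
  have hg_meas : AEStronglyMeasurable g := by simpa using (hg 0).1
  exact (hg n).congr' ((continuous_pow n).aestronglyMeasurable.mul hg_meas)
    (.of_forall fun x => by simp)

end Moments

section Kernel

variable {ε : ℝ}

@[fun_prop]
lemma continuous_Gam (ε : ℝ) : Continuous (Gam ε) := by
  unfold Gam; fun_prop

lemma Gam_nonneg (hε : 0 ≤ ε) (x : ℝ) : 0 ≤ Gam ε x := by
  unfold Gam; positivity

lemma norm_Gam_le (ε x : ℝ) : ‖Gam ε x‖ ≤ |1 / (ε * √π)| := by
  rw [Gam, norm_mul, Real.norm_eq_abs, Real.norm_of_nonneg (exp_pos _).le]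
  refine mul_le_of_le_one_right (abs_nonneg _) (exp_le_one_iff.2 ?_)
  exact div_nonpos_of_nonpos_of_nonneg (neg_nonpos.2 (sq_nonneg x)) (sq_nonneg ε)

lemma Gam_neg (ε x : ℝ) : Gam ε (-x) = Gam ε x := by
  simp [Gam]

lemma Gam_eq_mul_exp_neg_mul_sq (ε x : ℝ) :
    Gam ε x = 1 / (ε * √π) * exp (-(1 / ε ^ 2) * x ^ 2) := by
  rw [Gam]; ring_nf

lemma integrable_pow_mul_Gam (hε : ε ≠ 0) (n : ℕ) :
    Integrable (fun x => x ^ n * Gam ε x) := by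
  have h := integrable_rpow_mul_exp_neg_mul_sq (b := 1 / ε ^ 2) (by positivity) (s := n)
    (by linarith [n.cast_nonneg (α := ℝ)])
  simp_rw [rpow_natCast] at h
  exact (h.const_mul (1 / (ε * √π))).congr (.of_forall fun x => by
    simp only [Gam_eq_mul_exp_neg_mul_sq]; ring)

lemma integral_odd_pow_mul_Gam (ε : ℝ) (m : ℕ) : ∫ x, x ^ (2 * m + 1) * Gam ε x = 0 := by
  have h := integral_neg_eq_self (fun x => x ^ (2 * m + 1) * Gam ε x) volume
  simp only [Odd.neg_pow ⟨m, rfl⟩, Gam_neg, neg_mul, integral_neg] at h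
  linarith

lemma integral_Gam (hε : 0 < ε) : ∫ x, Gam ε x = 1 := by
  simp_rw [Gam_eq_mul_exp_neg_mul_sq]
  rw [integral_const_mul, integral_gaussian, div_div_eq_mul_div, div_one,
    sqrt_mul pi_pos.le, sqrt_sq hε.le]
  have := sqrt_pos.2 pi_pos
  field_simp

lemma sigGam_zero : sigGam 0 = 1 := by
  simpa [sigGam] using integral_Gam one_pos

lemma integral_sub_pow_mul_Gam_sub (hε : ε ≠ 0) (a c : ℝ) (n : ℕ) :
    ∫ x, (x - a) ^ (2 * n) * Gam ε (x - c) =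
      ∑ m ∈ range (n + 1),
        (2 * n).choose (2 * m) * (c - a) ^ (2 * n - 2 * m) * ∫ u, u ^ (2 * m) * Gam ε u := by
  have hshift := integral_sub_right_eq_self (μ := volume)
    (fun u => (u + (c - a)) ^ (2 * n) * Gam ε u) c
  simp only [sub_add_sub_cancel] at hshift
  rw [hshift, integral_add_pow_mul (integrable_pow_mul_Gam hε)]
  exact sum_range_two_mul_add_one_of_odd_eq_zero _
    (fun m => by rw [integral_odd_pow_mul_Gam, mul_zero]) n

end Kernel

section Density

lemma midpoint_sub_pow_mul_eq_sum (q : ℝ → ℝ) (a : ℝ) (l : ℕ) (p : ℝ × ℝ) :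
    ((p.1 + p.2) / 2 - a) ^ l * (q p.1 * q p.2) =
      ∑ j ∈ range (l + 1),
        l.choose j / 2 ^ l * ((p.1 - a) ^ j * q p.1 * ((p.2 - a) ^ (l - j) * q p.2)) := by
  rw [show (p.1 + p.2) / 2 - a = ((p.1 - a) + (p.2 - a)) / 2 by ring, div_pow, add_pow,
    sum_div, sum_mul]
  exact sum_congr rfl fun j _ => by ring

variable {q : ℝ → ℝ}

lemma integrable_sub_pow_mul (hq : ∀ i : ℕ, Integrable (fun y => y ^ i * q y)) (a : ℝ)
    (n : ℕ) :
    Integrable (fun y => (y - a) ^ n * q y) := by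
  simpa only [← sub_eq_add_neg] using integrable_add_pow_mul hq (-a) n

lemma integrable_midpoint_sub_pow_mul (hq : ∀ i : ℕ, Integrable (fun y => y ^ i * q y))
    (a : ℝ) (l : ℕ) :
    Integrable (fun p : ℝ × ℝ => ((p.1 + p.2) / 2 - a) ^ l * (q p.1 * q p.2))
      (volume.prod volume) := by
  simp_rw [midpoint_sub_pow_mul_eq_sum q a l]
  exact integrable_finsetSum _ fun j _ =>
    ((integrable_sub_pow_mul hq a j).mul_prod (integrable_sub_pow_mul hq a (l - j))).const_mul _

lemma integral_midpoint_sub_pow_mul (hq : ∀ i : ℕ, Integrable (fun y => y ^ i * q y))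
    (a : ℝ) (l : ℕ) :
    ∫ p : ℝ × ℝ, ((p.1 + p.2) / 2 - a) ^ l * (q p.1 * q p.2) ∂(volume.prod volume) =
      ∑ j ∈ range (l + 1), l.choose j / 2 ^ l *
        ((∫ y, (y - a) ^ j * q y) * ∫ y, (y - a) ^ (l - j) * q y) := by
  simp_rw [midpoint_sub_pow_mul_eq_sum q a l]
  rw [integral_finsetSum _ fun j _ => ((integrable_sub_pow_mul hq a j).mul_prod
    (integrable_sub_pow_mul hq a (l - j))).const_mul _]
  refine sum_congr rfl fun j _ => ?_
  rw [integral_const_mul, integral_prod_mul (fun y => (y - a) ^ j * q y)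
    (fun y => (y - a) ^ (l - j) * q y)]

end Density

section Smoothing

variable {ε : ℝ} {q : ℝ → ℝ}

lemma Ttil_eq_integral_prod (hq : Integrable q) (x : ℝ) :
    Ttil ε q x = ∫ p : ℝ × ℝ, Gam ε (x - (p.1 + p.2) / 2) * (q p.1 * q p.2)
      ∂(volume.prod volume) := by
  have hint : Integrable (fun p : ℝ × ℝ => Gam ε (x - (p.1 + p.2) / 2) * (q p.1 * q p.2))
      (volume.prod volume) :=
    (hq.mul_prod hq).bdd_mul (by fun_prop)
      (.of_forall fun p => norm_Gam_le ε _)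
  rw [Ttil, integral_integral (hint.congr (.of_forall fun p => by
    simp only [Function.uncurry]; ring))]
  exact integral_congr_ae (.of_forall fun p => by ring)

lemma integral_sub_pow_mul_Gam_midpoint (hε : ε ≠ 0) (a : ℝ) (n : ℕ) (p : ℝ × ℝ) :
    ∫ x, (x - a) ^ (2 * n) * (Gam ε (x - (p.1 + p.2) / 2) * (q p.1 * q p.2)) =
      ∑ m ∈ range (n + 1), (2 * n).choose (2 * m) * (∫ u, u ^ (2 * m) * Gam ε u) *
        (((p.1 + p.2) / 2 - a) ^ (2 * n - 2 * m) * (q p.1 * q p.2)) := by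
  conv_lhs => enter [2, x]; rw [← mul_assoc]
  rw [integral_mul_const, integral_sub_pow_mul_Gam_sub hε, sum_mul]
  exact sum_congr rfl fun m _ => by ring

lemma integrable_sub_pow_mul_Gam_midpoint (hε : 0 < ε) (hq_nonneg : ∀ y, 0 ≤ q y)
    (hq : ∀ i : ℕ, Integrable (fun y => y ^ i * q y)) (a : ℝ) (n : ℕ) :
    Integrable (Function.uncurry fun (x : ℝ) (p : ℝ × ℝ) =>
      (x - a) ^ (2 * n) * (Gam ε (x - (p.1 + p.2) / 2) * (q p.1 * q p.2)))
      (volume.prod (volume.prod volume)) := by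
  have hq_meas : AEStronglyMeasurable q := by simpa using (hq 0).1
  have hmeas : AEStronglyMeasurable (Function.uncurry fun (x : ℝ) (p : ℝ × ℝ) =>
      (x - a) ^ (2 * n) * (Gam ε (x - (p.1 + p.2) / 2) * (q p.1 * q p.2)))
      (volume.prod (volume.prod volume)) :=
    (by fun_prop : Continuous fun z : ℝ × (ℝ × ℝ) =>
      (z.1 - a) ^ (2 * n)).aestronglyMeasurable.mul
      ((by fun_prop : Continuous fun z : ℝ × (ℝ × ℝ) =>
        Gam ε (z.1 - (z.2.1 + z.2.2) / 2)).aestronglyMeasurable.mul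
        (hq_meas.comp_fst.mul hq_meas.comp_snd).comp_snd)
  have hnonneg : ∀ (x : ℝ) (p : ℝ × ℝ),
      0 ≤ (x - a) ^ (2 * n) * (Gam ε (x - (p.1 + p.2) / 2) * (q p.1 * q p.2)) := fun x p =>
    mul_nonneg ((even_two_mul n).pow_nonneg _) <|
      mul_nonneg (Gam_nonneg hε.le _) (mul_nonneg (hq_nonneg _) (hq_nonneg _))
  refine (integrable_prod_iff' hmeas).2 ⟨.of_forall fun p => ?_, ?_⟩
  · exact (integrable_add_pow_mul (integrable_pow_mul_Gam hε.ne')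
      ((p.1 + p.2) / 2 - a) (2 * n) |>.comp_sub_right ((p.1 + p.2) / 2)).mul_const
      (q p.1 * q p.2) |>.congr (.of_forall fun x => by simp [sub_add_sub_cancel, mul_assoc])
  · simp_rw [Function.uncurry_apply_pair, fun x p => Real.norm_of_nonneg (hnonneg x p),
      integral_sub_pow_mul_Gam_midpoint hε.ne']
    exact integrable_finsetSum _ fun m _ =>
      (integrable_midpoint_sub_pow_mul hq a _).const_mul _

theorem integral_sub_pow_mul_Ttil (hε : 0 < ε) (hq_nonneg : ∀ y, 0 ≤ q y)
    (hq : ∀ i : ℕ, Integrable (fun y => y ^ i * q y)) (a : ℝ) (n : ℕ) :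
    ∫ x, (x - a) ^ (2 * n) * Ttil ε q x =
      ∑ m ∈ range (n + 1), (2 * n).choose (2 * m) * (∫ u, u ^ (2 * m) * Gam ε u) *
        ∑ j ∈ range (2 * n - 2 * m + 1), (2 * n - 2 * m).choose j / 2 ^ (2 * n - 2 * m) *
          ((∫ y, (y - a) ^ j * q y) * ∫ y, (y - a) ^ (2 * n - 2 * m - j) * q y) := by
  have hq_int : Integrable q := by simpa using hq 0
  calc ∫ x, (x - a) ^ (2 * n) * Ttil ε q x
      = ∫ x : ℝ, ∫ p : ℝ × ℝ, (x - a) ^ (2 * n) *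
          (Gam ε (x - (p.1 + p.2) / 2) * (q p.1 * q p.2)) ∂(volume.prod volume) := by
        simp_rw [Ttil_eq_integral_prod hq_int, integral_const_mul]
    _ = ∫ p : ℝ × ℝ, (∫ x : ℝ, (x - a) ^ (2 * n) *
          (Gam ε (x - (p.1 + p.2) / 2) * (q p.1 * q p.2))) ∂(volume.prod volume) :=
        integral_integral_swap (integrable_sub_pow_mul_Gam_midpoint hε hq_nonneg hq a n)
    _ = _ := by
        simp_rw [integral_sub_pow_mul_Gam_midpoint hε.ne']
        rw [integral_finsetSum _ fun m _ => (integrable_midpoint_sub_pow_mul hq a _).const_mul _]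
        simp_rw [integral_const_mul, integral_midpoint_sub_pow_mul hq]

end Smoothing

lemma sum_choose_mul_moment_mul_moment (M : ℕ → ℝ) (hM0 : M 0 = 1) (hM1 : M 1 = 0) {k : ℕ}
    (hk : 1 ≤ k) :
    ∑ j ∈ range (2 * k + 1), ((2 * k).choose j : ℝ) * (M j * M (2 * k - j)) =
      2 * M (2 * k) +
        ∑ j ∈ Icc 2 (2 * k - 2), ((2 * k).choose j : ℝ) * M (2 * k - j) * M j := by
  have hsymm : ∀ j, ((2 * k).choose j : ℝ) * (M j * M (2 * k - j)) =
      (2 * k).choose j * M (2 * k - j) * M j := fun j => by ring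
  simp_rw [hsymm]
  have h0 : 0 ∈ range (2 * k + 1) := by simp
  have h2k : 2 * k ∈ (range (2 * k + 1)).erase 0 := by simp only [mem_erase, mem_range]; omega
  have hIcc : Icc 2 (2 * k - 2) ⊆ ((range (2 * k + 1)).erase 0).erase (2 * k) := by
    intro j; simp only [mem_Icc, mem_erase, mem_range]; omega
  rw [← add_sum_erase _ _ h0, ← add_sum_erase _ _ h2k, ← sum_subset hIcc ?odd]
  · simp only [Nat.choose_zero_right, Nat.choose_self, Nat.sub_zero, Nat.sub_self, hM0]
    ring
  · intro j hj hj'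
    obtain rfl | rfl : j = 1 ∨ j = 2 * k - 1 := by
      simp only [mem_erase, mem_range, mem_Icc] at hj hj'; omega
    · simp [hM1]
    · simp [show 2 * k - (2 * k - 1) = 1 by omega, hM1]

lemma sum_even_moment_expansion (s M : ℕ → ℝ) (hs0 : s 0 = 1) (hM0 : M 0 = 1) (hM1 : M 1 = 0)
    {k : ℕ} (hk : 1 ≤ k) :
    ∑ m ∈ range (k + 1), ((2 * k).choose (2 * m) : ℝ) * s m *
        ∑ j ∈ range (2 * k - 2 * m + 1),
          ((2 * k - 2 * m).choose j : ℝ) / 2 ^ (2 * k - 2 * m) * (M j * M (2 * k - 2 * m - j)) =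
      2 / 4 ^ k * M (2 * k)
        + ∑ l ∈ range k, ∑ j ∈ range (2 * l + 1),
            s (k - l) * (1 / 4 ^ l) * ((2 * k).choose (2 * l) : ℝ) * ((2 * l).choose j : ℝ) *
              M (2 * l - j) * M j
        + ∑ j ∈ Icc 2 (2 * k - 2),
            1 / 4 ^ k * ((2 * k).choose j : ℝ) * M (2 * k - j) * M j := by
  have hpow : ∀ l : ℕ, (2 : ℝ) ^ (2 * l) = 4 ^ l := fun l => by rw [pow_mul]; norm_num
  have hcentral : ∑ j ∈ range (2 * k + 1), ((2 * k).choose j : ℝ) / 2 ^ (2 * k) *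
      (M j * M (2 * k - j)) =
      2 / 4 ^ k * M (2 * k) + ∑ j ∈ Icc 2 (2 * k - 2), 1 / 4 ^ k * ((2 * k).choose j : ℝ) *
        M (2 * k - j) * M j := by
    simp_rw [div_mul_eq_mul_div, ← sum_div, sum_choose_mul_moment_mul_moment M hM0 hM1 hk,
      hpow, add_div, mul_div_right_comm, sum_div]
    exact congrArg _ (sum_congr rfl fun j _ => by ring)
  have hshift : ∀ l ∈ range k,
      ((2 * k).choose (2 * (k - 1 - l + 1)) : ℝ) * s (k - 1 - l + 1) *
      ∑ j ∈ range (2 * k - 2 * (k - 1 - l + 1) + 1),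
        ((2 * k - 2 * (k - 1 - l + 1)).choose j : ℝ) / 2 ^ (2 * k - 2 * (k - 1 - l + 1)) *
          (M j * M (2 * k - 2 * (k - 1 - l + 1) - j)) =
      ∑ j ∈ range (2 * l + 1), s (k - l) * (1 / 4 ^ l) * ((2 * k).choose (2 * l) : ℝ) *
        ((2 * l).choose j : ℝ) * M (2 * l - j) * M j := fun l hl => by
    have hl : l < k := mem_range.1 hl
    rw [show k - 1 - l + 1 = k - l by omega, show 2 * k - 2 * (k - l) = 2 * l by omega,
      show 2 * (k - l) = 2 * k - 2 * l by omega, Nat.choose_symm (by omega), hpow, mul_sum]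
    exact sum_congr rfl fun j _ => by ring
  rw [sum_range_succ', ← sum_range_reflect, sum_congr rfl hshift]
  simp only [mul_zero, Nat.sub_zero, Nat.choose_zero_right, Nat.cast_one, hs0, one_mul, hcentral]
  ring

theorem stmt2_general (ε : ℝ) (hε : 0 < ε) (k : ℕ) (hk : 1 ≤ k) (q : ℝ → ℝ)
    (hq_nonneg : ∀ x, 0 ≤ q x)
    (hq_prob : ∫ x, q x = 1)
    (hmom : ∀ n : ℕ, Integrable (fun x => |x| ^ n * q x))
    (M₁ : ℝ) (hM₁ : M₁ = ∫ x, x * q x)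
    (Mc : ℕ → ℝ) (hMc : ∀ j : ℕ, Mc j = ∫ x, (x - M₁) ^ j * q x)
    (hsig : ∀ m : ℕ, (∫ x, x ^ (2 * m) * Gam ε x) = sigGam m * ε ^ (2 * m)) :
    (∫ x, (x - M₁) ^ (2 * k) * Ttil ε q x)
      = (2 / 4 ^ k) * Mc (2 * k)
        + ∑ l ∈ Finset.range k, ∑ j ∈ Finset.range (2 * l + 1),
            sigGam (k - l) * ε ^ (2 * (k - l)) * (1 / 4 ^ l) *
              (Nat.choose (2 * k) (2 * l) : ℝ) * (Nat.choose (2 * l) j : ℝ) *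
              Mc (2 * l - j) * Mc j
        + ∑ j ∈ Finset.Icc 2 (2 * k - 2),
            (1 / 4 ^ k) * (Nat.choose (2 * k) j : ℝ) * Mc (2 * k - j) * Mc j := by
  have hq := integrable_pow_mul_of_integrable_abs_pow_mul hmom
  have hq_int : Integrable q := by simpa using hq 0
  have hMc0 : Mc 0 = 1 := by simpa [hMc] using hq_prob
  have hMc1 : Mc 1 = 0 := by
    simp_rw [hMc, pow_one, sub_mul]
    rw [integral_sub (by simpa using hq 1) (hq_int.const_mul M₁), integral_const_mul, hq_prob,
      ← hM₁, mul_one, sub_self]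
  rw [integral_sub_pow_mul_Ttil hε hq_nonneg hq]
  simp_rw [hsig, ← hMc]
  exact sum_even_moment_expansion (fun m => sigGam m * ε ^ (2 * m)) Mc (by simp [sigGam_zero])
    hMc0 hMc1 hk

theorem stmt2 (ε : ℝ) (hε : 0 < ε) (k : ℕ) (hk : 1 ≤ k) (q : ℝ → ℝ)
    (hq_nonneg : ∀ x, 0 ≤ q x)
    (hq_int : Integrable q)
    (hq_prob : ∫ x, q x = 1)
    (hmom : ∀ n : ℕ, Integrable (fun x => |x| ^ n * q x))
    (M₁ : ℝ) (hM₁ : M₁ = ∫ x, x * q x)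
    (Mc : ℕ → ℝ) (hMc : ∀ j : ℕ, Mc j = ∫ x, (x - M₁) ^ j * q x)
    (hsig : ∀ m : ℕ, (∫ x, x ^ (2 * m) * Gam ε x) = sigGam m * ε ^ (2 * m)) :
    (∫ x, (x - M₁) ^ (2 * k) * Ttil ε q x)
      = (2 / 4 ^ k) * Mc (2 * k)
        + ∑ l ∈ Finset.range k, ∑ j ∈ Finset.range (2 * l + 1),
            sigGam (k - l) * ε ^ (2 * (k - l)) * (1 / 4 ^ l) *
              (Nat.choose (2 * k) (2 * l) : ℝ) * (Nat.choose (2 * l) j : ℝ) *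
              Mc (2 * l - j) * Mc j
        + ∑ j ∈ Finset.Icc 2 (2 * k - 2),
            (1 / 4 ^ k) * (Nat.choose (2 * k) j : ℝ) * Mc (2 * k - j) * Mc j :=
  stmt2_general ε hε k hk q hq_nonneg hq_prob hmom M₁ hM₁ Mc hMc hsig
end

section
/- (Lemma 3.1(a), quasi-static tracking for logistic dynamics) Let ε ∈ (0,1) and let y_ε solve ε² y_ε'(t) = α_ε(t) (H_ε(t) − y_ε(t)) y_ε(t) with y_ε(0) = H_ε(0) + O(ε), where α_ε, H_ε : [0,∞) → ℝ are C¹ and satisfy 0 < α_L ≤ α_ε(t) ≤ α_U, 0 < H_L ≤ H_ε(t) ≤ H_U, |H_ε'(t)| ≤ C_H. Then there exists a constant C, depending only on C_H, H_L, H_U, α_L, α_U and the implicit constant in the initial condition, such that |y_ε(t) − H_ε(t)| ≤ C ε for all t ≥ 0 and all sufficiently small ε. -/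
/-! With `δ = C ε`, the error `y - H` cannot cross the barriers `± δ`: at `y - H = ± δ` the
relaxation term `ε⁻² α (H - y) y` has size at least of order `C α_L H_L / ε`, which beats the
drift `|H'| ≤ C_H` of the carrying capacity once `C` is large and `ε` is small. -/

lemma le_of_hasDerivAt_of_eq_imp_deriv_neg {f f' : ℝ → ℝ} {a c : ℝ}
    (hf : ∀ t ≥ a, HasDerivAt f (f' t) t) (ha : f a ≤ c)
    (hc : ∀ t ≥ a, f t = c → f' t < 0) : ∀ t ≥ a, f t ≤ c := fun _ ht =>
  image_le_of_deriv_right_lt_deriv_boundary (B := fun _ => c)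
    (fun s hs => (hf s hs.1).continuousAt.continuousWithinAt)
    (fun s hs => (hf s hs.1).hasDerivWithinAt) ha (fun _ => hasDerivAt_const _ c)
    (fun s hs => hc s hs.1) ⟨ht, le_rfl⟩

section LogisticTracking

variable {κ H_L C_H δ : ℝ} {k y H H' : ℝ → ℝ}

lemma logistic_sub_carrying_le (hκ : 0 < κ) (hδ : 0 < δ) (hH_L : 0 < H_L)
    (hgap : C_H < κ * δ * H_L)
    (hk : ∀ t ≥ (0:ℝ), κ ≤ k t) (hH : ∀ t ≥ (0:ℝ), H_L ≤ H t)
    (hH' : ∀ t ≥ (0:ℝ), HasDerivAt H (H' t) t) (hH'_le : ∀ t ≥ (0:ℝ), |H' t| ≤ C_H)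
    (hy : ∀ t ≥ (0:ℝ), HasDerivAt y (k t * (H t - y t) * y t) t) (h0 : y 0 - H 0 ≤ δ) :
    ∀ t ≥ (0:ℝ), y t - H t ≤ δ := by
  refine le_of_hasDerivAt_of_eq_imp_deriv_neg (fun t ht => (hy t ht).sub (hH' t ht)) h0 ?_
  intro t ht hδt
  have hy_eq : y t = H t + δ := by linarith
  have hrate : κ * δ * H_L ≤ k t * δ * y t :=
    mul_le_mul (mul_le_mul_of_nonneg_right (hk t ht) hδ.le) (by linarith [hH t ht]) hH_L.le
      (mul_nonneg (hκ.le.trans (hk t ht)) hδ.le)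
  rw [show H t - y t = -δ by linarith]
  linarith [neg_abs_le (H' t), hH'_le t ht]

lemma carrying_sub_logistic_le (hκ : 0 < κ) (hδ : 0 < δ) (hδH : δ < H_L)
    (hgap : C_H < κ * δ * (H_L - δ))
    (hk : ∀ t ≥ (0:ℝ), κ ≤ k t) (hH : ∀ t ≥ (0:ℝ), H_L ≤ H t)
    (hH' : ∀ t ≥ (0:ℝ), HasDerivAt H (H' t) t) (hH'_le : ∀ t ≥ (0:ℝ), |H' t| ≤ C_H)
    (hy : ∀ t ≥ (0:ℝ), HasDerivAt y (k t * (H t - y t) * y t) t) (h0 : H 0 - y 0 ≤ δ) :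
    ∀ t ≥ (0:ℝ), H t - y t ≤ δ := by
  refine le_of_hasDerivAt_of_eq_imp_deriv_neg (fun t ht => (hH' t ht).sub (hy t ht)) h0 ?_
  intro t ht hδt
  have hy_eq : y t = H t - δ := by linarith
  have hrate : κ * δ * (H_L - δ) ≤ k t * δ * y t :=
    mul_le_mul (mul_le_mul_of_nonneg_right (hk t ht) hδ.le) (by linarith [hH t ht])
      (by linarith) (mul_nonneg (hκ.le.trans (hk t ht)) hδ.le)
  rw [hδt]
  linarith [le_abs_self (H' t), hH'_le t ht]

theorem abs_logistic_sub_carrying_le (hκ : 0 < κ) (hδ : 0 < δ) (hδH : δ < H_L)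
    (hgap : C_H < κ * δ * (H_L - δ))
    (hk : ∀ t ≥ (0:ℝ), κ ≤ k t) (hH : ∀ t ≥ (0:ℝ), H_L ≤ H t)
    (hH' : ∀ t ≥ (0:ℝ), HasDerivAt H (H' t) t) (hH'_le : ∀ t ≥ (0:ℝ), |H' t| ≤ C_H)
    (hy : ∀ t ≥ (0:ℝ), HasDerivAt y (k t * (H t - y t) * y t) t) (h0 : |y 0 - H 0| ≤ δ) :
    ∀ t ≥ (0:ℝ), |y t - H t| ≤ δ := by
  have hH_L : 0 < H_L := hδ.trans hδH
  have hgap' : C_H < κ * δ * H_L := hgap.trans_le (by gcongr; linarith)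
  intro t ht
  rw [abs_le] at h0 ⊢
  constructor
  · linarith [carrying_sub_logistic_le hκ hδ hδH hgap hk hH hH' hH'_le hy (by linarith) t ht]
  · exact logistic_sub_carrying_le hκ hδ hH_L hgap' hk hH hH' hH'_le hy h0.2 t ht

end LogisticTracking

theorem stmt9_general (α_L α_U H_L H_U C_H K₀ : ℝ)
    (hαL : 0 < α_L) (hHL : 0 < H_L)
    (hCH : 0 ≤ C_H) (hK₀ : 0 ≤ K₀) :
    ∃ C > (0:ℝ), ∃ ε₀ > (0:ℝ), ∀ ε : ℝ, 0 < ε → ε < ε₀ →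
      ∀ y α H : ℝ → ℝ,
        ContDiff ℝ 1 α → ContDiff ℝ 1 H →
        (∀ t ≥ (0:ℝ), α_L ≤ α t ∧ α t ≤ α_U) →
        (∀ t ≥ (0:ℝ), H_L ≤ H t ∧ H t ≤ H_U) →
        (∀ t ≥ (0:ℝ), |deriv H t| ≤ C_H) →
        (∀ t ≥ (0:ℝ), HasDerivAt y (ε ^ (-2 : ℤ) * (α t * (H t - y t) * y t)) t) →
        |y 0 - H 0| ≤ K₀ * ε →
        ∀ t ≥ (0:ℝ), |y t - H t| ≤ C * ε := by
  set C := K₀ + 2 * C_H / (α_L * H_L) + 1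
  have hC_H : 2 * C_H ≤ (C - 1) * (α_L * H_L) := by
    rw [← div_le_iff₀ (by positivity)]; linarith
  have hK₀C : K₀ + 1 ≤ C := by
    simp only [C]; linarith [show 0 ≤ 2 * C_H / (α_L * H_L) by positivity]
  have hC : 0 < C := by linarith
  refine ⟨C, hC, min 1 (H_L / (2 * C)), by positivity, ?_⟩
  intro ε hε hε₀ y α H _ hH hα_bd hH_bd hH'_le hy h0 t ht
  have hε1 : ε < 1 := hε₀.trans_le (min_le_left _ _)
  have hCε : C * ε ≤ H_L / 2 := by
    have := (hε₀.trans_le (min_le_right _ _)).le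
    rw [le_div_iff₀ (by positivity)] at this; linarith
  have hgap : C_H < ε ^ (-2 : ℤ) * α_L * (C * ε) * (H_L - C * ε) := by
    have hsimp : ε ^ (-2 : ℤ) * α_L * (C * ε) * (H_L - C * ε)
        = α_L * C * (H_L - C * ε) / ε := by field_simp
    rw [hsimp, lt_div_iff₀ hε]
    nlinarith [mul_pos hαL hC]
  refine abs_logistic_sub_carrying_le (k := fun t => ε ^ (-2 : ℤ) * α t) (by positivity)
    (by positivity) (by linarith [mul_pos hC hε]) hgap
    (fun t ht => by gcongr; exact (hα_bd t ht).1) (fun t ht => (hH_bd t ht).1)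
    (fun t _ => (hH.differentiable one_ne_zero t).hasDerivAt) hH'_le
    (fun t ht => (hy t ht).congr_deriv (by ring)) (h0.trans (by gcongr; linarith)) t ht

theorem stmt9 (α_L α_U H_L H_U C_H K₀ : ℝ)
    (hαL : 0 < α_L) (hαLU : α_L ≤ α_U) (hHL : 0 < H_L) (hHLU : H_L ≤ H_U)
    (hCH : 0 ≤ C_H) (hK₀ : 0 ≤ K₀) :
    ∃ C > (0:ℝ), ∃ ε₀ > (0:ℝ), ∀ ε : ℝ, 0 < ε → ε < ε₀ →
      ∀ y α H : ℝ → ℝ,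
        ContDiff ℝ 1 α → ContDiff ℝ 1 H →
        (∀ t ≥ (0:ℝ), α_L ≤ α t ∧ α t ≤ α_U) →
        (∀ t ≥ (0:ℝ), H_L ≤ H t ∧ H t ≤ H_U) →
        (∀ t ≥ (0:ℝ), |deriv H t| ≤ C_H) →
        (∀ t ≥ (0:ℝ), HasDerivAt y (ε ^ (-2 : ℤ) * (α t * (H t - y t) * y t)) t) →
        |y 0 - H 0| ≤ K₀ * ε →
        ∀ t ≥ (0:ℝ), |y t - H t| ≤ C * ε :=
  stmt9_general α_L α_U H_L H_U C_H K₀ hαL hHL hCH hK₀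
end
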